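/- If the colored union graph of a structured switched linear system contains an S-dilation, then the structured switched linear system is not structurally controllable. -/
import Mathlib


/-- A realization of the structured pattern `(PA, PB)` of a switched linear system:
each matrix vanishes at every fixed-zero (non-free-parameter) position. -/
def IsRealization {m n r : ℕ}
    (PA : Fin m → Fin n → Fin n → Prop) (PB : Fin m → Fin n → Fin r → Prop)
    (A : Fin m → Matrix (Fin n) (Fin n) ℝ) (B : Fin m → Matrix (Fin n) (Fin r) ℝ) : Prop :=
  (∀ i k l, ¬ PA i k l → A i k l = 0) ∧ (∀ i k j, ¬ PB i k j → B i k j = 0)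

/-- The switched controllable subspace `⟨A_1,…,A_m | B_1,…,B_m⟩`: the smallest subspace of
`ℝ^n` containing the columns of every `B i` and invariant under every `A i`. -/
noncomputable def switchedCtrb {m n r : ℕ} (A : Fin m → Matrix (Fin n) (Fin n) ℝ)
    (B : Fin m → Matrix (Fin n) (Fin r) ℝ) : Submodule ℝ (Fin n → ℝ) :=
  sInf {W : Submodule ℝ (Fin n → ℝ) |
    (∀ i j, (fun k => B i k j) ∈ W) ∧ ∀ i, ∀ x ∈ W, (A i).mulVec x ∈ W}

/-- Structural controllability of the structured switched linear system. -/
def StructurallyControllable {m n r : ℕ}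
    (PA : Fin m → Fin n → Fin n → Prop) (PB : Fin m → Fin n → Fin r → Prop) : Prop :=
  ∃ A B, IsRealization PA PB A B ∧ switchedCtrb A B = ⊤

/-- Edge relation of the graph `G_i` of subsystem `i`, on vertices `Fin r ⊕ Fin n`
(inputs on the left, states on the right). -/
def subEdge {m n r : ℕ}
    (PA : Fin m → Fin n → Fin n → Prop) (PB : Fin m → Fin n → Fin r → Prop)
    (i : Fin m) (v w : Fin r ⊕ Fin n) : Prop :=
  match v, w with
  | Sum.inl j, Sum.inr k => PB i k j
  | Sum.inr l, Sum.inr k => PA i k l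
  | _, _ => False

/-- Edge relation of the union graph `G`. -/
def unionEdge {m n r : ℕ}
    (PA : Fin m → Fin n → Fin n → Prop) (PB : Fin m → Fin n → Fin r → Prop)
    (v w : Fin r ⊕ Fin n) : Prop :=
  ∃ i, subEdge PA PB i v w

/-- A state vertex is accessible if some directed path in the union graph starting at an
input vertex reaches it. -/
def Accessible {m n r : ℕ}
    (PA : Fin m → Fin n → Fin n → Prop) (PB : Fin m → Fin n → Fin r → Prop)
    (k : Fin n) : Prop :=
  ∃ j : Fin r, Relation.ReflTransGen (unionEdge PA PB) (Sum.inl j) (Sum.inr k)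

/-- The colored union graph contains an `S`-dilation: a nonempty set `S` of state vertices
with `Σ_{i=1}^m |T_i(S)| < |S|`, where `T_i(S)` is the set of vertices with an edge into
some vertex of `S` in the subsystem graph `G_i`. -/
def HasSDilation {m n r : ℕ}
    (PA : Fin m → Fin n → Fin n → Prop) (PB : Fin m → Fin n → Fin r → Prop) : Prop :=
  ∃ S : Set (Fin n), S.Nonempty ∧
    (∑ i : Fin m,
      ({v : Fin r ⊕ Fin n | ∃ k ∈ S, subEdge PA PB i v (Sum.inr k)}).ncard) < S.ncard

/-- If the colored union graph contains an `S`-dilation, then the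
structured switched linear system is not structurally controllable. -/
theorem not_structurallyControllable_of_sDilation
    {m n r : ℕ} (PA : Fin m → Fin n → Fin n → Prop) (PB : Fin m → Fin n → Fin r → Prop)
    (h : HasSDilation PA PB) :
    ¬ StructurallyControllable PA PB := by
  classical
  obtain ⟨S, hSne, hcard⟩ := h
  rintro ⟨A, B, ⟨hA, hB⟩, hctrb⟩
  set T : Fin m → Set (Fin r ⊕ Fin n) :=
    fun i => {v : Fin r ⊕ Fin n | ∃ k ∈ S, subEdge PA PB i v (Sum.inr k)} with hT
  haveI : ∀ i, Fintype ↥(T i) := fun i => Fintype.ofFinite _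
  haveI : Fintype ↥S := Fintype.ofFinite _
  -- entries of the combined pattern matrix
  set M : Fin m → Fin n → (Fin r ⊕ Fin n) → ℝ :=
    fun i k v => Sum.casesOn v (fun j => B i k j) (fun l => A i k l) with hM
  -- the linear map sending a row vector supported on S to its products with all blocks
  let Φ : (↥S → ℝ) →ₗ[ℝ] ((Σ i : Fin m, ↥(T i)) → ℝ) :=
    { toFun := fun z p => ∑ k : ↥S, z k * M p.1 k p.2
      map_add' := by
        intro x y; funext p
        simp [add_mul, Finset.sum_add_distrib]
      map_smul' := by
        intro c x; funext p
        simp [Finset.mul_sum, mul_assoc] }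
  -- Φ is not injective by a dimension count
  have hnotinj : ¬ Function.Injective Φ := by
    intro hinj
    have hle := LinearMap.finrank_le_finrank_of_injective hinj
    rw [Module.finrank_fintype_fun_eq_card, Module.finrank_fintype_fun_eq_card,
      Fintype.card_sigma] at hle
    have h1 : Fintype.card ↥S = S.ncard := by
      rw [← Nat.card_coe_set_eq, Nat.card_eq_fintype_card]
    have h2 : ∀ i, Fintype.card ↥(T i) = (T i).ncard := by
      intro i
      rw [← Nat.card_coe_set_eq, Nat.card_eq_fintype_card]
    rw [h1] at hle
    simp only [h2] at hle
    exact absurd (lt_of_le_of_lt hle hcard) (lt_irrefl _)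
  obtain ⟨a, b, hab, hne⟩ := Function.not_injective_iff.mp hnotinj
  set z : ↥S → ℝ := a - b with hz
  have hzne : z ≠ 0 := sub_ne_zero.mpr hne
  have hΦz : Φ z = 0 := by rw [hz, map_sub, hab, sub_self]
  -- extend z by zero to all of Fin n
  set zz : Fin n → ℝ := fun k => if hk : k ∈ S then z ⟨k, hk⟩ else 0 with hzz
  -- key vanishing property
  have key : ∀ (i : Fin m) (v : Fin r ⊕ Fin n), ∑ k : Fin n, zz k * M i k v = 0 := by
    intro i v
    by_cases hv : v ∈ T i
    · have hsum : ∑ k : Fin n, zz k * M i k v = ∑ k ∈ S.toFinset, zz k * M i k v := by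
        refine (Finset.sum_subset S.toFinset.subset_univ ?_).symm
        intro k _ hk
        rw [Set.mem_toFinset] at hk
        simp [hzz, hk]
      have hsub : ∑ k ∈ S.toFinset, zz k * M i k v = ∑ k : ↥S, zz ↑k * M i ↑k v :=
        Finset.sum_subtype S.toFinset (fun x => Set.mem_toFinset) _
      have hzzk : ∀ k : ↥S, zz ↑k = z k := by
        intro k; simp [hzz, k.2]
      have : ∑ k : ↥S, zz ↑k * M i ↑k v = Φ z ⟨i, ⟨v, hv⟩⟩ := by
        simp only [Φ, LinearMap.coe_mk, AddHom.coe_mk]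
        exact Finset.sum_congr rfl fun k _ => by rw [hzzk k]
      rw [hsum, hsub, this, hΦz]
      rfl
    · refine Finset.sum_eq_zero fun k _ => ?_
      by_cases hk : k ∈ S
      · have hMz : M i k v = 0 := by
          have hnotedge : ¬ subEdge PA PB i v (Sum.inr k) := fun he => hv ⟨k, hk, he⟩
          cases v with
          | inl j => exact hB i k j hnotedge
          | inr l => exact hA i k l hnotedge
        rw [hMz, mul_zero]
      · simp [hzz, hk]
  -- the annihilating functional
  let f : (Fin n → ℝ) →ₗ[ℝ] ℝ :=
    { toFun := fun x => ∑ k : Fin n, zz k * x k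
      map_add' := by intro x y; simp [mul_add, Finset.sum_add_distrib]
      map_smul' := by
        intro c x
        simp [Finset.mul_sum]
        ring_nf
        exact Finset.sum_congr rfl fun k _ => by ring }
  have hW : LinearMap.ker f ∈ {W : Submodule ℝ (Fin n → ℝ) |
      (∀ i j, (fun k => B i k j) ∈ W) ∧ ∀ i, ∀ x ∈ W, (A i).mulVec x ∈ W} := by
    constructor
    · intro i j
      have := key i (Sum.inl j)
      simpa [f, LinearMap.mem_ker] using this
    · intro i x hx
      simp only [LinearMap.mem_ker] at hx ⊢
      have hexp : f ((A i).mulVec x) = ∑ l : Fin n, (∑ k : Fin n, zz k * A i k l) * x l := by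
        simp only [f, LinearMap.coe_mk, AddHom.coe_mk, Matrix.mulVec, dotProduct]
        calc ∑ k : Fin n, zz k * ∑ l : Fin n, A i k l * x l
            = ∑ k : Fin n, ∑ l : Fin n, zz k * (A i k l * x l) := by
              simp [Finset.mul_sum]
          _ = ∑ l : Fin n, ∑ k : Fin n, zz k * (A i k l * x l) := Finset.sum_comm
          _ = ∑ l : Fin n, (∑ k : Fin n, zz k * A i k l) * x l := by
              refine Finset.sum_congr rfl fun l _ => ?_
              rw [Finset.sum_mul]
              exact Finset.sum_congr rfl fun k _ => by ring
      rw [hexp]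
      refine Finset.sum_eq_zero fun l _ => ?_
      have := key i (Sum.inr l)
      simp only [hM] at this
      rw [this, zero_mul]
  have hle : switchedCtrb A B ≤ LinearMap.ker f := sInf_le hW
  rw [hctrb, top_le_iff] at hle
  -- but f is not zero on all of ℝ^n
  obtain ⟨k0, hk0⟩ := Function.ne_iff.mp hzne
  have hk0S : (k0 : Fin n) ∈ S := k0.2
  have hmem : (Pi.single (k0 : Fin n) 1 : Fin n → ℝ) ∈ LinearMap.ker f := by
    rw [hle]; trivial
  rw [LinearMap.mem_ker] at hmem
  have : f (Pi.single (k0 : Fin n) 1) = zz (k0 : Fin n) := by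
    simp only [f, LinearMap.coe_mk, AddHom.coe_mk]
    rw [Finset.sum_eq_single (k0 : Fin n)]
    · simp
    · intro b _ hb; simp [Pi.single_apply, hb]
    · intro hb; exact absurd (Finset.mem_univ _) hb
  rw [this] at hmem
  apply hk0
  simpa [hzz, hk0S] using hmem
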